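/- arXiv:1908.02718 — 5 statements merged into one kernel-verified Lean document; each statement's English description precedes it below -/
import Mathlib

section
/- For any target value θ ∈ ℝ, the mean squared error of the bagged estimator has the form MSE(θ̃) = F/N + G, where F = E_L[Var_U(θ̂(L_U))] ≥ 0 and G = Var_L(E_U[θ̂(L_U)]) + (E_L[E_U[θ̂(L_U)]] − θ)^2 ≥ 0 are independent of N. In particular, MSE(θ̃) is nonincreasing in N. -/
open MeasureTheory ProbabilityTheory

/-- The uniform probability measure on the `n^m` sampling-with-replacement maps
`{1,…,m} → {1,…,n}`. -/
noncomputable def unif (n m : ℕ) [NeZero n] : Measure (Fin m → Fin n) :=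
  (PMF.uniformOfFintype (Fin m → Fin n)).toMeasure

/-- The MSE of the bagged estimator with `N` iterations, for target `θ`. -/
noncomputable def baggedMSE {Ω : Type*} [MeasurableSpace Ω] (μ : Measure Ω)
    (n m : ℕ) [NeZero n] (X : Fin n → Ω → ℝ) (θhat : (Fin m → ℝ) → ℝ) (θ : ℝ)
    (N : ℕ) : ℝ :=
  ∫ p : Ω × (Fin N → (Fin m → Fin n)),
      ((N : ℝ)⁻¹ * ∑ i : Fin N, θhat (fun j => X (p.2 i j) p.1) - θ) ^ 2
      ∂(μ.prod (Measure.pi fun _ : Fin N => unif n m))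

/-!
Given the data `L`, the `N` bootstrap estimates `θ̂(L_{U^i})` are i.i.d. with mean `E_U θ̂(L_U)`
and variance `Var_U θ̂(L_U)`, so by the bias–variance decomposition the conditional MSE of their
average is `Var_U θ̂(L_U) / N + (E_U θ̂(L_U) - θ)²`. Integrating over `L` and decomposing the
second term once more, now with respect to `L`, gives `F / N + G`.
-/

lemma integral_sub_const_sq {Ω : Type*} [MeasurableSpace Ω] {μ : Measure Ω}
    [IsProbabilityMeasure μ] {X : Ω → ℝ} (hX : MemLp X 2 μ) (c : ℝ) :
    ∫ ω, (X ω - c) ^ 2 ∂μ = Var[X; μ] + (μ[X] - c) ^ 2 := by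
  rw [← variance_sub_const hX.aestronglyMeasurable c,
    variance_eq_sub (X := fun ω => X ω - c) (hX.sub (memLp_const c)),
    integral_sub (hX.integrable one_le_two) (integrable_const c), integral_const]
  simp

lemma integral_pi_average_sub_const_sq {K : Type*} [MeasurableSpace K] {π : Measure K}
    [IsProbabilityMeasure π] {f : K → ℝ} (hf : MemLp f 2 π) (c : ℝ) {N : ℕ} (hN : N ≠ 0) :
    ∫ v, ((N : ℝ)⁻¹ * ∑ i, f (v i) - c) ^ 2 ∂(Measure.pi fun _ : Fin N => π)
      = Var[f; π] / N + (π[f] - c) ^ 2 := by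
  have hcoord (i : Fin N) : MemLp (fun v : Fin N → K => f (v i)) 2 (Measure.pi fun _ => π) :=
    hf.comp_measurePreserving (measurePreserving_eval _ i)
  have hsum : MemLp (fun v : Fin N → K => ∑ i, f (v i)) 2 (Measure.pi fun _ => π) :=
    memLp_finsetSum _ fun i _ => hcoord i
  have hvar : Var[fun v => ∑ i, f (v i); Measure.pi fun _ : Fin N => π] = N * Var[f; π] := by
    have h := variance_sum_pi (μ := fun _ : Fin N => π) (X := fun _ => f) fun _ => hf
    simpa [Finset.sum_fn] using h
  have hmean : ∫ v, ∑ i, f (v i) ∂(Measure.pi fun _ : Fin N => π) = N * π[f] := by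
    rw [integral_finsetSum _ fun i _ => (hcoord i).integrable one_le_two]
    simp [integral_comp_eval (μ := fun _ : Fin N => π) hf.aestronglyMeasurable]
  have h := integral_sub_const_sq (hsum.const_mul (N : ℝ)⁻¹) c
  simp only at h
  rw [h, variance_const_mul, integral_const_mul, hvar, hmean]
  field_simp

section
variable {Ω K E : Type*} [MeasurableSpace Ω] [MeasurableSpace K] [Fintype K]
  [MeasurableSingletonClass K] [NormedAddCommGroup E] {μ : Measure Ω} (π : Measure K)
  [IsFiniteMeasure π]

lemma memLp_integral_fintype [NormedSpace ℝ E] [CompleteSpace E] {p : ENNReal} {F : K → Ω → E}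
    (hF : ∀ u, MemLp (F u) p μ) : MemLp (fun ω => ∫ u, F u ω ∂π) p μ := by
  have h (ω : Ω) : ∫ u, F u ω ∂π = ∑ u, π.real {u} • F u ω :=
    integral_fintype Integrable.of_finite
  simp_rw [h]
  exact memLp_finsetSum _ fun u _ => (hF u).const_smul _

lemma integrable_prod_of_fintype_right {g : Ω → K → E}
    (hg : ∀ u, Integrable (fun ω => g ω u) μ) :
    Integrable (fun p : Ω × K => g p.1 p.2) (μ.prod π) := by
  have h : (fun p : Ω × K => g p.1 p.2)
      = fun p => ∑ u, (Prod.snd ⁻¹' {u}).indicator (fun p : Ω × K => g p.1 u) p := by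
    ext p
    rw [Finset.sum_eq_single_of_mem p.2 (Finset.mem_univ _)]
    · simp
    · intro u _ hu
      simp [Ne.symm hu]
  rw [h]
  exact integrable_finsetSum _ fun u _ =>
    ((hg u).comp_fst π).indicator (measurable_snd (measurableSet_singleton u))

end

lemma integral_prod_pi_average_sub_const_sq {Ω K : Type*} [MeasurableSpace Ω] [MeasurableSpace K]
    [Fintype K] [MeasurableSingletonClass K] {μ : Measure Ω} [IsProbabilityMeasure μ]
    (π : Measure K) [IsProbabilityMeasure π] {a : K → Ω → ℝ} (ha : ∀ u, MemLp (a u) 2 μ)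
    (c : ℝ) {N : ℕ} (hN : N ≠ 0) :
    ∫ p : Ω × (Fin N → K), ((N : ℝ)⁻¹ * ∑ i, a (p.2 i) p.1 - c) ^ 2
        ∂(μ.prod (Measure.pi fun _ => π))
      = (∫ ω, Var[fun u => a u ω; π] ∂μ) / N
        + (Var[fun ω => ∫ u, a u ω ∂π; μ] + (∫ ω, ∫ u, a u ω ∂π ∂μ - c) ^ 2) := by
  have hmean : MemLp (fun ω => ∫ u, a u ω ∂π) 2 μ := memLp_integral_fintype π ha
  have hvar : Integrable (fun ω => Var[fun u => a u ω; π]) μ := by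
    have h (ω : Ω) : Var[fun u => a u ω; π] = ∫ u, (a u ω - ∫ u', a u' ω ∂π) ^ 2 ∂π :=
      variance_eq_integral Measurable.of_discrete.aemeasurable
    simp_rw [h, ← memLp_one_iff_integrable]
    exact memLp_integral_fintype π fun u =>
      memLp_one_iff_integrable.2 ((ha u).sub hmean).integrable_sq
  have hslice (v : Fin N → K) :
      Integrable (fun ω => ((N : ℝ)⁻¹ * ∑ i, a (v i) ω - c) ^ 2) μ :=
    (((memLp_finsetSum _ fun i _ => ha (v i)).const_mul _).sub (memLp_const c)).integrable_sq
  rw [integral_prod _ (integrable_prod_of_fintype_right _ hslice)]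
  have hinner (ω : Ω) :
      ∫ v : Fin N → K, ((N : ℝ)⁻¹ * ∑ i, a (v i) ω - c) ^ 2 ∂(Measure.pi fun _ => π)
        = Var[fun u => a u ω; π] / N + (∫ u, a u ω ∂π - c) ^ 2 :=
    integral_pi_average_sub_const_sq (f := fun u => a u ω) MemLp.of_discrete c hN
  simp only [hinner]
  have hbias : Integrable (fun ω => (∫ u, a u ω ∂π - c) ^ 2) μ :=
    (hmean.sub (memLp_const c)).integrable_sq
  rw [integral_add (hvar.div_const _) hbias, integral_div,
    integral_sub_const_sq hmean c]

instance isProbabilityMeasure_unif (n m : ℕ) [NeZero n] : IsProbabilityMeasure (unif n m) := by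
  unfold unif
  infer_instance

theorem bagged_estimator_mse_general
    {Ω : Type*} [MeasurableSpace Ω] (μ : Measure Ω) [IsProbabilityMeasure μ]
    (n m : ℕ) [NeZero n]
    (X : Fin n → Ω → ℝ)
    (θhat : (Fin m → ℝ) → ℝ)
    (hL2 : ∀ u : Fin m → Fin n, MemLp (fun ω => θhat fun j => X (u j) ω) 2 μ)
    (θ : ℝ) :
    (0 ≤ ∫ ω, variance (fun u => θhat fun j => X (u j) ω) (unif n m) ∂μ) ∧
    (0 ≤ variance (fun ω => ∫ u, θhat (fun j => X (u j) ω) ∂(unif n m)) μ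
          + (∫ ω, ∫ u, θhat (fun j => X (u j) ω) ∂(unif n m) ∂μ - θ) ^ 2) ∧
    (∀ N : ℕ, 1 ≤ N →
      baggedMSE μ n m X θhat θ N
        = (∫ ω, variance (fun u => θhat fun j => X (u j) ω) (unif n m) ∂μ) / N
          + (variance (fun ω => ∫ u, θhat (fun j => X (u j) ω) ∂(unif n m)) μ
              + (∫ ω, ∫ u, θhat (fun j => X (u j) ω) ∂(unif n m) ∂μ - θ) ^ 2)) ∧
    (∀ N₁ N₂ : ℕ, 1 ≤ N₁ → N₁ ≤ N₂ →
      baggedMSE μ n m X θhat θ N₂ ≤ baggedMSE μ n m X θhat θ N₁) := by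
  have hF : 0 ≤ ∫ ω, variance (fun u => θhat fun j => X (u j) ω) (unif n m) ∂μ :=
    integral_nonneg fun ω => variance_nonneg _ _
  have hmse (N : ℕ) (hN : 1 ≤ N) := integral_prod_pi_average_sub_const_sq (unif n m) hL2 θ
    (Nat.one_le_iff_ne_zero.1 hN)
  unfold baggedMSE
  refine ⟨hF, add_nonneg (variance_nonneg _ _) (sq_nonneg _), hmse, ?_⟩
  intro N₁ N₂ hN₁ hN₁₂
  rw [hmse N₁ hN₁, hmse N₂ (hN₁.trans hN₁₂)]
  have hN₁pos : (0 : ℝ) < N₁ := by exact_mod_cast hN₁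
  gcongr

/-- `MSE(θ̃) = F/N + G` with `F = E_L[Var_U(θ̂(L_U))] ≥ 0` and
`G = Var_L(E_U[θ̂(L_U)]) + (E_L[E_U[θ̂(L_U)]] − θ)² ≥ 0` independent of `N`;
in particular the MSE is nonincreasing in `N`. -/
theorem bagged_estimator_mse
    {Ω : Type*} [MeasurableSpace Ω] (μ : Measure Ω) [IsProbabilityMeasure μ]
    (n m : ℕ) [NeZero n]
    (X : Fin n → Ω → ℝ) (hXmeas : ∀ i, Measurable (X i))
    (hXindep : iIndepFun X μ)
    (ν : Measure ℝ) (hXid : ∀ i, Measure.map (X i) μ = ν)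
    (θhat : (Fin m → ℝ) → ℝ) (hθmeas : Measurable θhat)
    (hL2 : ∀ u : Fin m → Fin n, MemLp (fun ω => θhat fun j => X (u j) ω) 2 μ)
    (θ : ℝ) :
    (0 ≤ ∫ ω, variance (fun u => θhat fun j => X (u j) ω) (unif n m) ∂μ) ∧
    (0 ≤ variance (fun ω => ∫ u, θhat (fun j => X (u j) ω) ∂(unif n m)) μ
          + (∫ ω, ∫ u, θhat (fun j => X (u j) ω) ∂(unif n m) ∂μ - θ) ^ 2) ∧
    (∀ N : ℕ, 1 ≤ N →
      baggedMSE μ n m X θhat θ N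
        = (∫ ω, variance (fun u => θhat fun j => X (u j) ω) (unif n m) ∂μ) / N
          + (variance (fun ω => ∫ u, θhat (fun j => X (u j) ω) ∂(unif n m)) μ
              + (∫ ω, ∫ u, θhat (fun j => X (u j) ω) ∂(unif n m) ∂μ - θ) ^ 2)) ∧
    (∀ N₁ N₂ : ℕ, 1 ≤ N₁ → N₁ ≤ N₂ →
      baggedMSE μ n m X θhat θ N₂ ≤ baggedMSE μ n m X θhat θ N₁) :=
  bagged_estimator_mse_general μ n m X θhat hL2 θ
end

section
/- In the same setting, the bagged sample variance estimator ṽ(L,B) = (1/N) Σ_{i=1}^N v̂(L_{U^i}) (N independent bootstrap samples of size m) has expectation E[ṽ(L,B)] = ((n−1)/n)·μ₂; in particular its bias is −μ₂/n, independent of N and m. -/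
/-!
The unbiased sample variance of `y₁, …, y_m` is the U-statistic
`(2m(m-1))⁻¹ ∑_{j,k} (y_j - y_k)²`. For uncorrelated centred data with common second moment `μ₂`,
`E (X_a - X_b)² = 2μ₂` if `a ≠ b` and `0` if `a = b`, so for a fixed resampling map `u` the
expectation of `v̂(L_u)` is `μ₂` times the proportion of ordered pairs `(j, k)` with `u j ≠ u k`.
Under uniform resampling a pair `j ≠ k` collides with probability `1/n`, which gives
`(1 - 1/n) μ₂`. All `N` bootstrap replicates have this same expectation, so averaging them
changes nothing.
-/

open MeasureTheory ProbabilityTheory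

/-- The unbiased sample variance of the bootstrap sample `L_U` of size `m`. -/
noncomputable def vhatBoot {Ω : Type*} (n m : ℕ) (X : Fin n → Ω → ℝ)
    (ω : Ω) (u : Fin m → Fin n) : ℝ :=
  ((m : ℝ) - 1)⁻¹ * ∑ j, (X (u j) ω - (m : ℝ)⁻¹ * ∑ k, X (u k) ω) ^ 2

open Finset

theorem sum_sq_sub_mean_eq_sum_sum_sq_sub {ι : Type*} [Fintype ι] [Nonempty ι] (y : ι → ℝ) :
    ∑ j, (y j - (Fintype.card ι : ℝ)⁻¹ * ∑ k, y k) ^ 2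
      = (2 * Fintype.card ι : ℝ)⁻¹ * ∑ j, ∑ k, (y j - y k) ^ 2 := by
  have hc : (Fintype.card ι : ℝ) ≠ 0 := by positivity
  simp only [sub_sq, sum_add_distrib, sum_sub_distrib, ← mul_sum, ← sum_mul, sum_const,
    card_univ, nsmul_eq_mul, mul_pow]
  field_simp
  ring

theorem card_filter_apply_eq_apply {ι α : Type*} [Fintype ι] [Fintype α] [DecidableEq ι]
    [DecidableEq α] {j k : ι} (hjk : j ≠ k) :
    #{u : ι → α | u j = u k} = Fintype.card α ^ (Fintype.card ι - 1) := by
  let e : {u : ι → α // u j = u k} ≃ ({i // i ≠ j} → α) :=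
    { toFun u i := u.1 i
      invFun r := ⟨fun i => if h : i = j then r ⟨k, hjk.symm⟩ else r ⟨i, h⟩, by simp [hjk.symm]⟩
      left_inv u := by
        ext i
        by_cases h : i = j
        · subst h; simp [u.2]
        · simp [h]
      right_inv r := by
        funext i
        simp [i.2] }
  rw [← Fintype.card_subtype, Fintype.card_congr e, Fintype.card_fun,
    Fintype.card_subtype_compl, Fintype.card_subtype_eq]

theorem sum_card_filter_apply_ne {ι α : Type*} [Fintype ι] [Fintype α] [DecidableEq ι]
    [DecidableEq α] :
    ∑ u : ι → α, (#{p : ι × ι | u p.1 ≠ u p.2} : ℝ)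
      = Fintype.card ι * (Fintype.card ι - 1)
        * (Fintype.card α ^ Fintype.card ι - Fintype.card α ^ (Fintype.card ι - 1)) := by
  have hpair (j k : ι) : (#{u : ι → α | u j ≠ u k} : ℝ)
      = if j = k then 0
        else (Fintype.card α : ℝ) ^ Fintype.card ι
          - (Fintype.card α : ℝ) ^ (Fintype.card ι - 1) := by
    split_ifs with hjk
    · simp [hjk]
    · have hsplit := card_filter_add_card_filter_not (s := univ) fun u : ι → α => u j = u k
      rw [card_filter_apply_eq_apply hjk, card_univ, Fintype.card_fun] at hsplit
      rw [eq_sub_iff_add_eq', ← Nat.cast_pow, ← Nat.cast_pow, ← hsplit]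
      push_cast
      rfl
  calc ∑ u : ι → α, (#{p : ι × ι | u p.1 ≠ u p.2} : ℝ)
      = ∑ p : ι × ι, (#{u : ι → α | u p.1 ≠ u p.2} : ℝ) := by
        simp only [natCast_card_filter]
        exact sum_comm
    _ = _ := by
        have hoff : #{p : ι × ι | p.1 ≠ p.2} = #(univ : Finset ι).offDiag := by
          congr 1; ext p; simp [mem_offDiag]
        simp only [hpair, sum_ite, sum_const_zero, zero_add, sum_const, nsmul_eq_mul, hoff,
          offDiag_card, card_univ]
        rw [Nat.cast_sub (Nat.le_mul_self _)]
        push_cast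
        ring

theorem integrable_prod_of_finite_right {α V E : Type*} [MeasurableSpace α] [MeasurableSpace V]
    [NormedAddCommGroup E] [Finite V] [MeasurableSingletonClass V] {μ : Measure α} [SFinite μ]
    {ρ : Measure V} [IsFiniteMeasure ρ] {F : α × V → E} (hF : AEStronglyMeasurable F (μ.prod ρ))
    (h : ∀ v, Integrable (fun x => F (x, v)) μ) : Integrable F (μ.prod ρ) :=
  (integrable_prod_iff' hF).2 ⟨ae_of_all _ h, .of_finite⟩

theorem integral_prod_pi_average {α V ι : Type*} [MeasurableSpace α] [MeasurableSpace V]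
    [Fintype ι] [Nonempty ι] {μ : Measure α} [SFinite μ] {ρ : Measure V} [IsProbabilityMeasure ρ]
    {F : α × V → ℝ} (hF : Integrable F (μ.prod ρ)) :
    ∫ p : α × (ι → V), (Fintype.card ι : ℝ)⁻¹ * ∑ i, F (p.1, p.2 i)
        ∂(μ.prod (Measure.pi fun _ => ρ))
      = ∫ p, F p ∂(μ.prod ρ) := by
  have hpres (i : ι) : MeasurePreserving (Prod.map id (Function.eval i))
      (μ.prod (Measure.pi fun _ => ρ)) (μ.prod ρ) :=
    (MeasurePreserving.id μ).prod (measurePreserving_eval _ i)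
  have hcoord (i : ι) : ∫ p : α × (ι → V), F (p.1, p.2 i) ∂(μ.prod (Measure.pi fun _ => ρ))
      = ∫ p, F p ∂(μ.prod ρ) := by
    rw [← (hpres i).map_eq, integral_map (hpres i).measurable.aemeasurable
      ((hpres i).map_eq ▸ hF.1)]
    rfl
  have hint (i : ι) : Integrable (fun p : α × (ι → V) => F (p.1, p.2 i))
      (μ.prod (Measure.pi fun _ => ρ)) :=
    (hpres i).integrable_comp_of_integrable hF
  rw [integral_const_mul, integral_finsetSum _ fun i _ => hint i]
  simp only [hcoord, sum_const, card_univ, nsmul_eq_mul]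
  field_simp

section Moments

variable {Ω : Type*} [MeasurableSpace Ω] {μ : Measure Ω}

theorem ProbabilityTheory.IndepFun.integral_sub_sq_of_integral_eq_zero [IsFiniteMeasure μ]
    {X Y : Ω → ℝ} (hXY : IndepFun X Y μ) (hX : MemLp X 2 μ) (hY : MemLp Y 2 μ)
    (hX0 : μ[X] = 0) (hY0 : μ[Y] = 0) :
    ∫ ω, (X ω - Y ω) ^ 2 ∂μ = ∫ ω, X ω ^ 2 ∂μ + ∫ ω, Y ω ^ 2 ∂μ := by
  have hXY0 : ∫ ω, X ω - Y ω ∂μ = 0 := by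
    rw [integral_sub (hX.integrable one_le_two) (hY.integrable one_le_two), hX0, hY0, sub_zero]
  calc ∫ ω, (X ω - Y ω) ^ 2 ∂μ = Var[fun ω => X ω - Y ω; μ] :=
        (variance_of_integral_eq_zero (hX.aemeasurable.sub hY.aemeasurable) hXY0).symm
    _ = Var[X; μ] + Var[Y; μ] := by
        rw [variance_fun_sub hX hY, hXY.covariance_eq_zero hX hY]
        ring
    _ = ∫ ω, X ω ^ 2 ∂μ + ∫ ω, Y ω ^ 2 ∂μ := by
        rw [variance_of_integral_eq_zero hX.aemeasurable hX0,
          variance_of_integral_eq_zero hY.aemeasurable hY0]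

theorem integral_sub_sq_eq_ite [IsFiniteMeasure μ] {ι : Type*} [DecidableEq ι]
    {X : ι → Ω → ℝ} {v : ℝ} (hX : ∀ i, MemLp (X i) 2 μ)
    (hindep : Pairwise fun i j => IndepFun (X i) (X j) μ) (hmean : ∀ i, μ[X i] = 0)
    (hvar : ∀ i, ∫ ω, X i ω ^ 2 ∂μ = v) (a b : ι) :
    ∫ ω, (X a ω - X b ω) ^ 2 ∂μ = if a = b then 0 else 2 * v := by
  split_ifs with hab
  · simp [hab]
  · rw [(hindep hab).integral_sub_sq_of_integral_eq_zero (hX a) (hX b) (hmean a) (hmean b),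
      hvar, hvar, two_mul]

end Moments

instance (n m : ℕ) [NeZero n] : IsProbabilityMeasure (unif n m) :=
  PMF.toMeasure.isProbabilityMeasure _

theorem integral_card_apply_ne_unif (n m : ℕ) [NeZero n] :
    ∫ u, (#{p : Fin m × Fin m | u p.1 ≠ u p.2} : ℝ) ∂(unif n m)
      = m * (m - 1) * (1 - (n : ℝ)⁻¹) := by
  have hn : (n : ℝ) ≠ 0 := Nat.cast_ne_zero.2 (NeZero.ne n)
  rw [unif, PMF.integral_eq_sum]
  simp only [PMF.uniformOfFintype_apply, smul_eq_mul, ← mul_sum, sum_card_filter_apply_ne,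
    Fintype.card_fun, Fintype.card_fin, ENNReal.toReal_inv, ENNReal.toReal_natCast]
  rcases m with _ | m
  · simp
  · push_cast
    rw [pow_succ]
    field_simp

section Bootstrap

variable {Ω : Type*} [MeasurableSpace Ω] {μ : Measure Ω} {n m : ℕ} {X : Fin n → Ω → ℝ}

theorem measurable_vhatBoot (hX : ∀ i, Measurable (X i)) :
    Measurable fun p : Ω × (Fin m → Fin n) => vhatBoot n m X p.1 p.2 :=
  measurable_from_prod_countable_left fun u => by
    simp only [vhatBoot]
    fun_prop

theorem integrable_vhatBoot (hX : ∀ i, MemLp (X i) 2 μ) (u : Fin m → Fin n) :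
    Integrable (fun ω => vhatBoot n m X ω u) μ := by
  refine (integrable_finsetSum _ fun j _ => ?_).const_mul _
  exact ((hX (u j)).sub ((memLp_finsetSum _ fun k _ => hX (u k)).const_mul _)).integrable_sq

theorem integral_vhatBoot [IsFiniteMeasure μ] (hm : 2 ≤ m) {v : ℝ} (hX : ∀ i, MemLp (X i) 2 μ)
    (hindep : Pairwise fun i j => IndepFun (X i) (X j) μ) (hmean : ∀ i, μ[X i] = 0)
    (hvar : ∀ i, ∫ ω, X i ω ^ 2 ∂μ = v) (u : Fin m → Fin n) :
    ∫ ω, vhatBoot n m X ω u ∂μ = v / (m * (m - 1)) * #{p : Fin m × Fin m | u p.1 ≠ u p.2} := by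
  have : Nonempty (Fin m) := ⟨⟨0, by omega⟩⟩
  have hpairwise (ω : Ω) : vhatBoot n m X ω u
      = ((m : ℝ) - 1)⁻¹ * ((2 * m : ℝ)⁻¹ * ∑ j, ∑ k, (X (u j) ω - X (u k) ω) ^ 2) := by
    have h := sum_sq_sub_mean_eq_sum_sum_sq_sub fun j => X (u j) ω
    rw [Fintype.card_fin] at h
    rw [vhatBoot, h]
  have hint (j k : Fin m) : Integrable (fun ω => (X (u j) ω - X (u k) ω) ^ 2) μ :=
    ((hX _).sub (hX _)).integrable_sq
  simp_rw [hpairwise]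
  rw [integral_const_mul, integral_const_mul,
    integral_finsetSum _ fun j _ => integrable_finsetSum _ fun k _ => hint j k]
  simp only [integral_finsetSum _ fun k _ => hint _ k,
    integral_sub_sq_eq_ite hX hindep hmean hvar, natCast_card_filter, Fintype.sum_prod_type]
  have hm1 : (m : ℝ) - 1 ≠ 0 := by
    have : (2 : ℝ) ≤ m := by exact_mod_cast hm
    linarith
  have hm0 : (m : ℝ) ≠ 0 := by positivity
  have hcount : ∑ j : Fin m, ∑ k : Fin m, (if u j = u k then 0 else 2 * v)
      = 2 * v * ∑ j : Fin m, ∑ k : Fin m, (if u j ≠ u k then 1 else 0) := by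
    simp only [mul_sum, ite_not, mul_ite, mul_one, mul_zero]
  rw [hcount]
  field_simp

theorem integral_integral_vhatBoot_unif [NeZero n] [IsFiniteMeasure μ] (hm : 2 ≤ m) {v : ℝ}
    (hX : ∀ i, MemLp (X i) 2 μ) (hindep : Pairwise fun i j => IndepFun (X i) (X j) μ)
    (hmean : ∀ i, μ[X i] = 0) (hvar : ∀ i, ∫ ω, X i ω ^ 2 ∂μ = v) :
    ∫ u, ∫ ω, vhatBoot n m X ω u ∂μ ∂(unif n m) = (1 - (n : ℝ)⁻¹) * v := by
  have hm0 : (m : ℝ) ≠ 0 := by positivity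
  have hm1 : (m : ℝ) - 1 ≠ 0 := by
    have : (2 : ℝ) ≤ m := by exact_mod_cast hm
    linarith
  simp_rw [integral_vhatBoot hm hX hindep hmean hvar]
  rw [integral_const_mul, integral_card_apply_ne_unif]
  field_simp

end Bootstrap

/-- The bagged sample variance estimator satisfies
`E[ṽ(L,B)] = ((n−1)/n)·μ₂`; in particular its bias is `−μ₂/n`,
independent of `N` and `m`. -/
theorem bagged_sample_variance_mean_and_bias
    {Ω : Type*} [MeasurableSpace Ω] (μ : Measure Ω) [IsProbabilityMeasure μ]
    (n m N : ℕ) [NeZero n] (hm : 2 ≤ m) (hN : 0 < N)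
    (X : Fin n → Ω → ℝ) (hXmeas : ∀ i, Measurable (X i))
    (hXindep : iIndepFun X μ)
    (ν : Measure ℝ) (hXid : ∀ i, Measure.map (X i) μ = ν)
    (hL4 : ∀ i, MemLp (X i) 4 μ)
    (hcentered : ∫ ω, X ⟨0, Nat.pos_of_ne_zero (NeZero.ne n)⟩ ω ∂μ = 0)
    (μ₂ : ℝ)
    (hμ₂ : μ₂ = ∫ ω, (X ⟨0, Nat.pos_of_ne_zero (NeZero.ne n)⟩ ω) ^ 2 ∂μ) :
    (∫ p : Ω × (Fin N → (Fin m → Fin n)),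
        (N : ℝ)⁻¹ * ∑ i : Fin N, vhatBoot n m X p.1 (p.2 i)
        ∂(μ.prod (Measure.pi fun _ : Fin N => unif n m))
      = (((n : ℝ) - 1) / n) * μ₂) ∧
    ((∫ p : Ω × (Fin N → (Fin m → Fin n)),
        (N : ℝ)⁻¹ * ∑ i : Fin N, vhatBoot n m X p.1 (p.2 i)
        ∂(μ.prod (Measure.pi fun _ : Fin N => unif n m))) - μ₂
      = -μ₂ / n) := by
  set i₀ : Fin n := ⟨0, Nat.pos_of_ne_zero (NeZero.ne n)⟩
  have hX2 (i : Fin n) : MemLp (X i) 2 μ := (hL4 i).mono_exponent (by norm_num)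
  have hident (i : Fin n) : IdentDistrib (X i) (X i₀) μ μ :=
    ⟨(hXmeas i).aemeasurable, (hXmeas i₀).aemeasurable, (hXid i).trans (hXid i₀).symm⟩
  have hmean (i : Fin n) : μ[X i] = 0 := (hident i).integral_eq.trans hcentered
  have hvar (i : Fin n) : ∫ ω, X i ω ^ 2 ∂μ = μ₂ :=
    ((hident i).comp (measurable_id.pow_const 2)).integral_eq.trans hμ₂.symm
  have hindep : Pairwise fun i j => IndepFun (X i) (X j) μ := fun i j hij => hXindep.indepFun hij
  have hintegrable : Integrable (fun p : Ω × (Fin m → Fin n) => vhatBoot n m X p.1 p.2)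
      (μ.prod (unif n m)) :=
    integrable_prod_of_finite_right (measurable_vhatBoot hXmeas).aestronglyMeasurable
      (integrable_vhatBoot hX2)
  have : Nonempty (Fin N) := ⟨⟨0, hN⟩⟩
  have hn : (n : ℝ) ≠ 0 := Nat.cast_ne_zero.2 (NeZero.ne n)
  have hmean_bag : ∫ p : Ω × (Fin N → (Fin m → Fin n)),
        (N : ℝ)⁻¹ * ∑ i : Fin N, vhatBoot n m X p.1 (p.2 i)
        ∂(μ.prod (Measure.pi fun _ : Fin N => unif n m))
      = (((n : ℝ) - 1) / n) * μ₂ :=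
    calc _ = ∫ p, vhatBoot n m X p.1 p.2 ∂(μ.prod (unif n m)) := by
          simpa using integral_prod_pi_average (ι := Fin N) hintegrable
      _ = ∫ u, ∫ ω, vhatBoot n m X ω u ∂μ ∂(unif n m) := integral_prod_symm _ hintegrable
      _ = (1 - (n : ℝ)⁻¹) * μ₂ := integral_integral_vhatBoot_unif hm hX2 hindep hmean hvar
      _ = _ := by field_simp
  refine ⟨hmean_bag, ?_⟩
  rw [hmean_bag]
  field_simp
  ring
end

section
/- For i.i.d. centered X_1,...,X_n with finite fourth moment, the conditional expectation of the bootstrap sample variance over the uniform resampling satisfies: E_U[v̂(L_U)] has variance (over L) equal to Var_L(E_U[v̂(L_U)]) = ((3−n)(n−1)/n³)·μ₂² + ((n−1)²/n³)·μ₄. -/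
/-!
Writing the unbiased sample variance as `(2m(m-1))⁻¹ ∑_{j,k} (y_j - y_k)²` and noting that for
`j ≠ k` the pair `(u j, u k)` is uniform on `Fin n × Fin n`, the resampling average
`E_U[v̂(L_U)]` is the plug-in variance `(2n²)⁻¹ ∑_{a,b} (X_a - X_b)²`, i.e. the quadratic form
`∑ A_ab X_a X_b` with `A = n⁻¹ (I - n⁻¹ J)`. For independent centred variables with common
second and fourth moments, `E[X_i X_j X_k X_l]` vanishes unless the indices pair up, whence
`Var(∑ A_ij X_i X_j) = (μ₄ - 3μ₂²) ∑ A_ii² + μ₂² ∑ A_ij (A_ij + A_ji)`; for the plug-in matrix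
these two sums are `(n-1)²/n³` and `2(n-1)/n²`.
-/

open MeasureTheory ProbabilityTheory

open Finset

namespace Fintype

variable {α β M : Type*} [Fintype α] [DecidableEq α] [Fintype β] [AddCommMonoid M]

theorem sum_comp_eval (a : α) (h : β → M) :
    ∑ v : α → β, h (v a) = (card β ^ (card α - 1)) • ∑ b, h b := by
  rw [← (Equiv.funSplitAt a β).symm.sum_comp, sum_prod_type]
  simp [sum_const, card_subtype_compl, smul_sum]

theorem sum_comp_eval_eval {a a' : α} (ha : a' ≠ a) (g : β → β → M) :
    ∑ v : α → β, g (v a) (v a') = (card β ^ (card α - 2)) • ∑ b, ∑ b', g b b' := by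
  rw [← (Equiv.funSplitAt a β).symm.sum_comp, sum_prod_type, smul_sum]
  refine Finset.sum_congr rfl fun b _ => ?_
  simp only [Equiv.funSplitAt_symm_apply, dif_neg ha, dite_true]
  rw [sum_comp_eval (⟨a', ha⟩ : {i // i ≠ a}) (g b), card_subtype_compl,
    card_subtype_eq, Nat.sub_sub]

end Fintype

theorem sum_sub_mean_sq_eq_sum_sum_sub_sq {ι : Type*} [Fintype ι] (y : ι → ℝ) :
    ∑ j, (y j - (Fintype.card ι : ℝ)⁻¹ * ∑ k, y k) ^ 2
      = (2 * Fintype.card ι : ℝ)⁻¹ * ∑ j, ∑ k, (y j - y k) ^ 2 := by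
  rcases isEmpty_or_nonempty ι with _ | _
  · simp
  simp only [sub_sq, sum_add_distrib, sum_sub_distrib, ← mul_sum, ← sum_mul, sum_const,
    card_univ, nsmul_eq_mul, mul_pow]
  field_simp
  ring

instance inst_s8 (n m : ℕ) [NeZero n] : IsProbabilityMeasure (unif n m) := by
  unfold unif; infer_instance

theorem integral_unif_comp_eval_eval {n m : ℕ} [NeZero n] {j k : Fin m} (hjk : k ≠ j)
    (g : Fin n → Fin n → ℝ) :
    ∫ u, g (u j) (u k) ∂unif n m = ((n : ℝ) ^ 2)⁻¹ * ∑ a, ∑ b, g a b := by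
  have hm : 2 ≤ m := Fintype.card_fin m ▸ Fintype.one_lt_card_iff.2 ⟨k, j, hjk⟩
  have hpow : (n : ℝ) ^ m = n ^ (m - 2) * n ^ 2 := by rw [← pow_add, Nat.sub_add_cancel hm]
  rw [unif, PMF.integral_eq_sum]
  simp only [PMF.uniformOfFintype_apply, Fintype.card_pi, Fintype.card_fin, prod_const,
    card_univ, ENNReal.toReal_inv, ENNReal.toReal_natCast, smul_eq_mul,
    ← mul_sum, Fintype.sum_comp_eval_eval hjk, nsmul_eq_mul]
  have hn : (n : ℝ) ≠ 0 := NeZero.ne _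
  push_cast
  rw [hpow]
  field_simp

theorem integral_vhatBoot_s8 {Ω : Type*} {n m : ℕ} [NeZero n] (hm : 2 ≤ m) (X : Fin n → Ω → ℝ)
    (ω : Ω) :
    ∫ u, vhatBoot n m X ω u ∂unif n m
      = (2 * (n : ℝ) ^ 2)⁻¹ * ∑ a, ∑ b, (X a ω - X b ω) ^ 2 := by
  have hm1 : (m : ℝ) - 1 ≠ 0 := by
    have : (2 : ℝ) ≤ m := by exact_mod_cast hm
    linarith
  have hpair (j k : Fin m) : ∫ u, (X (u j) ω - X (u k) ω) ^ 2 ∂unif n m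
      = if j = k then 0 else ((n : ℝ) ^ 2)⁻¹ * ∑ a, ∑ b, (X a ω - X b ω) ^ 2 := by
    split_ifs with h
    · simp [h]
    · exact integral_unif_comp_eval_eval (Ne.symm h) fun a b => (X a ω - X b ω) ^ 2
  have hvhat (u : Fin m → Fin n) : vhatBoot n m X ω u
      = ((m : ℝ) - 1)⁻¹ * ((2 * (m : ℝ))⁻¹ * ∑ j, ∑ k, (X (u j) ω - X (u k) ω) ^ 2) := by
    have hsum := sum_sub_mean_sq_eq_sum_sum_sub_sq fun j => X (u j) ω
    rw [Fintype.card_fin] at hsum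
    rw [vhatBoot, hsum]
  have hoff (c : ℝ) : ∑ j : Fin m, ∑ k : Fin m, (if j = k then 0 else c) = m * (m - 1) * c := by
    simp [sum_ite, filter_ne, Nat.cast_sub (one_le_two.trans hm), mul_assoc]
  simp only [hvhat, integral_const_mul]
  simp only [integral_finsetSum _ fun _ _ => Integrable.of_finite, hpair, hoff]
  field_simp

instance : ENNReal.HolderTriple 4 4 2 := ⟨by
  rw [← two_mul, show (4 : ENNReal) = 2 * 2 by norm_num,
    ENNReal.mul_inv (by norm_num) (by norm_num), ← mul_assoc,
    ENNReal.mul_inv_cancel (by norm_num) (by norm_num), one_mul]⟩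

namespace ProbabilityTheory

variable {Ω ι : Type*} [MeasurableSpace Ω] {μ : Measure Ω} {X : ι → Ω → ℝ}

theorem iIndepFun.integral_mul_eq_zero_of_ne (hindep : iIndepFun X μ)
    (hmeas : ∀ i, Measurable (X i))
    {a b c d : ι} (ha : ∫ ω, X a ω ∂μ = 0) (hb : a ≠ b) (hc : a ≠ c) (hd : a ≠ d) :
    ∫ ω, X a ω * (X b ω * X c ω * X d ω) ∂μ = 0 := by
  classical
  let T : Finset ι := {b, c, d}
  have hφ : Measurable fun v : ({a} : Finset ι) → ℝ => v ⟨a, mem_singleton_self a⟩ :=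
    measurable_pi_apply _
  have hψ : Measurable fun v : T → ℝ =>
      v ⟨b, by simp [T]⟩ * v ⟨c, by simp [T]⟩ * v ⟨d, by simp [T]⟩ := by
    fun_prop
  have h := (hindep.indepFun_finset {a} T (by simp [T, hb, hc, hd]) hmeas).comp hφ hψ
  calc _ = (∫ ω, X a ω ∂μ) * ∫ ω, X b ω * X c ω * X d ω ∂μ :=
        h.integral_fun_mul_eq_mul_integral (hmeas a).aestronglyMeasurable (by fun_prop)
    _ = 0 := by rw [ha, zero_mul]

theorem iIndepFun.integral_pow_mul_pow (hindep : iIndepFun X μ)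
    (hmeas : ∀ i, Measurable (X i)) {a b : ι} (hab : a ≠ b) (p q : ℕ) :
    ∫ ω, X a ω ^ p * X b ω ^ q ∂μ = (∫ ω, X a ω ^ p ∂μ) * ∫ ω, X b ω ^ q ∂μ :=
  ((hindep.indepFun hab).comp (measurable_id.pow_const p) (measurable_id.pow_const q))
    |>.integral_fun_mul_eq_mul_integral (by fun_prop) (by fun_prop)

theorem iIndepFun.integral_mul_mul_mul [DecidableEq ι] (hindep : iIndepFun X μ)
    (hmeas : ∀ i, Measurable (X i)) {μ₂ μ₄ : ℝ} (h1 : ∀ i, ∫ ω, X i ω ∂μ = 0)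
    (h2 : ∀ i, ∫ ω, X i ω ^ 2 ∂μ = μ₂) (h4 : ∀ i, ∫ ω, X i ω ^ 4 ∂μ = μ₄) (i j k l : ι) :
    ∫ ω, X i ω * X j ω * (X k ω * X l ω) ∂μ
      = (if i = j ∧ k = l then μ₂ ^ 2 else 0) + (if i = k ∧ j = l then μ₂ ^ 2 else 0)
        + (if i = l ∧ j = k then μ₂ ^ 2 else 0)
        + (if i = j ∧ j = k ∧ k = l then μ₄ - 3 * μ₂ ^ 2 else 0) := by
  have isolated {a b c d : ι} (hb : a ≠ b) (hc : a ≠ c) (hd : a ≠ d) :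
      ∫ ω, X a ω * (X b ω * X c ω * X d ω) ∂μ = 0 :=
    hindep.integral_mul_eq_zero_of_ne hmeas (h1 a) hb hc hd
  have paired {a b : ι} (hab : a ≠ b) : ∫ ω, X a ω ^ 2 * X b ω ^ 2 ∂μ = μ₂ ^ 2 := by
    rw [hindep.integral_pow_mul_pow hmeas hab, h2, h2, sq]
  have reorder {f g : Ω → ℝ} {v : ℝ} (hfg : ∀ ω, f ω = g ω) (hg : ∫ ω, g ω ∂μ = v) :
      ∫ ω, f ω ∂μ = v := by
    rw [← hg]; exact congrArg _ (funext hfg)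
  rcases eq_or_ne i j with rfl | hij
  · rcases eq_or_ne k l with rfl | hkl
    · rcases eq_or_ne i k with rfl | hik
      · exact (reorder (fun ω => by ring) (h4 i)).trans
          (by simp only [and_self, if_true]; ring)
      · exact (reorder (fun ω => by ring) (paired hik)).trans (by simp [hik])
    · rcases eq_or_ne i k with rfl | hik
      · exact (reorder (fun ω => by ring) (isolated hkl.symm hkl.symm hkl.symm)).trans
          (by simp [hkl])
      · exact (reorder (fun ω => by ring) (isolated hik.symm hik.symm hkl)).trans
          (by simp [hik, hkl])
  · rcases eq_or_ne i k with rfl | hik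
    · rcases eq_or_ne j l with rfl | hjl
      · exact (reorder (fun ω => by ring) (paired hij)).trans (by simp [hij, hij.symm])
      · exact (reorder (fun ω => by ring) (isolated hij.symm hij.symm hjl)).trans
          (by simp [hij, hij.symm, hjl])
    · rcases eq_or_ne i l with rfl | hil
      · rcases eq_or_ne j k with rfl | hjk
        · exact (reorder (fun ω => by ring) (paired hij)).trans (by simp [hij, hij.symm])
        · exact (reorder (fun ω => by ring) (isolated hik.symm hjk.symm hik.symm)).trans
            (by simp [hij, hij.symm, hik, hik.symm, hjk])
      · exact (reorder (fun ω => by ring) (isolated hij hik hil)).trans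
          (by simp [hij, hik, hil])

theorem iIndepFun.integral_mul [DecidableEq ι] (hindep : iIndepFun X μ)
    (hmeas : ∀ i, Measurable (X i)) {μ₂ : ℝ} (h1 : ∀ i, ∫ ω, X i ω ∂μ = 0)
    (h2 : ∀ i, ∫ ω, X i ω ^ 2 ∂μ = μ₂) (i j : ι) :
    ∫ ω, X i ω * X j ω ∂μ = if i = j then μ₂ else 0 := by
  rcases eq_or_ne i j with rfl | hij
  · simp [← h2 i, sq]
  · simpa [hij, h1] using hindep.integral_pow_mul_pow hmeas hij 1 1

theorem iIndepFun.variance_quadratic_form [Fintype ι] [IsProbabilityMeasure μ]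
    (hindep : iIndepFun X μ) (hmeas : ∀ i, Measurable (X i)) (hL4 : ∀ i, MemLp (X i) 4 μ)
    {μ₂ μ₄ : ℝ} (h1 : ∀ i, ∫ ω, X i ω ∂μ = 0) (h2 : ∀ i, ∫ ω, X i ω ^ 2 ∂μ = μ₂)
    (h4 : ∀ i, ∫ ω, X i ω ^ 4 ∂μ = μ₄) (A : Matrix ι ι ℝ) :
    variance (fun ω => ∑ i, ∑ j, A i j * (X i ω * X j ω)) μ
      = (μ₄ - 3 * μ₂ ^ 2) * ∑ i, A i i ^ 2 + μ₂ ^ 2 * ∑ i, ∑ j, A i j * (A i j + A j i) := by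
  classical
  have hL2 (i j : ι) : MemLp (fun ω => X i ω * X j ω) 2 μ := (hL4 j).mul' (hL4 i)
  have hint₂ (i j : ι) : Integrable (fun ω => X i ω * X j ω) μ :=
    (hL2 i j).integrable one_le_two
  have hint₄ (i j k l : ι) : Integrable (fun ω => X i ω * X j ω * (X k ω * X l ω)) μ :=
    (hL2 i j).integrable_mul (hL2 k l)
  have hQ : MemLp (fun ω => ∑ i, ∑ j, A i j * (X i ω * X j ω)) 2 μ :=
    memLp_finsetSum _ fun i _ => memLp_finsetSum _ fun j _ => (hL2 i j).const_mul (A i j)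
  have hsq (ω : Ω) : (∑ i, ∑ j, A i j * (X i ω * X j ω)) ^ 2
      = ∑ i, ∑ j, ∑ k, ∑ l, A i j * A k l * (X i ω * X j ω * (X k ω * X l ω)) := by
    simp only [sq, sum_mul, mul_sum]
    exact sum_congr rfl fun i _ => sum_congr rfl fun j _ => sum_congr rfl fun k _ =>
      sum_congr rfl fun l _ => by ring
  rw [variance_eq_sub hQ]
  simp only [Pi.pow_apply, hsq]
  simp (disch := intros; fun_prop) only [integral_finsetSum, integral_const_mul,
    hindep.integral_mul hmeas h1 h2,
    hindep.integral_mul_mul_mul hmeas h1 h2 h4]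
  simp only [ite_and, mul_add, mul_ite, mul_zero, sum_add_distrib, sum_ite_irrel, sum_ite_eq,
    mem_univ, if_true, sum_const_zero]
  simp only [← sum_mul, ← mul_sum, ← sq]
  ring

end ProbabilityTheory

noncomputable def empiricalVarianceMatrix (ι : Type*) [Fintype ι] [DecidableEq ι] :
    Matrix ι ι ℝ :=
  Matrix.of fun i j =>
    (Fintype.card ι : ℝ)⁻¹ * ((if i = j then 1 else 0) - (Fintype.card ι : ℝ)⁻¹)

theorem inv_two_mul_sq_mul_sum_sum_sub_sq {ι : Type*} [Fintype ι] [DecidableEq ι]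
    (x : ι → ℝ) :
    (2 * (Fintype.card ι : ℝ) ^ 2)⁻¹ * ∑ a, ∑ b, (x a - x b) ^ 2
      = ∑ a, ∑ b, empiricalVarianceMatrix ι a b * (x a * x b) := by
  rcases isEmpty_or_nonempty ι with _ | _
  · simp
  simp only [empiricalVarianceMatrix, Matrix.of_apply, sub_sq, mul_sub, sub_mul, mul_ite, ite_mul,
    mul_one, mul_zero, zero_mul, sum_add_distrib, sum_sub_distrib, sum_ite_eq, mem_univ, if_true,
    sum_const, card_univ, nsmul_eq_mul, ← mul_sum, ← sum_mul]
  field_simp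
  ring

theorem sum_empiricalVarianceMatrix_diag_sq (ι : Type*) [Fintype ι] [DecidableEq ι]
    [Nonempty ι] :
    ∑ i, empiricalVarianceMatrix ι i i ^ 2
      = ((Fintype.card ι : ℝ) - 1) ^ 2 / (Fintype.card ι : ℝ) ^ 3 := by
  simp only [empiricalVarianceMatrix, Matrix.of_apply, if_true, sum_const, card_univ,
    nsmul_eq_mul]
  field_simp

theorem sum_sum_empiricalVarianceMatrix_mul_add_transpose (ι : Type*) [Fintype ι]
    [DecidableEq ι] [Nonempty ι] :
    ∑ i, ∑ j, empiricalVarianceMatrix ι i j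
        * (empiricalVarianceMatrix ι i j + empiricalVarianceMatrix ι j i)
      = 2 * ((Fintype.card ι : ℝ) - 1) / (Fintype.card ι : ℝ) ^ 2 := by
  simp only [empiricalVarianceMatrix, Matrix.of_apply, eq_comm, mul_add, mul_sub, sub_mul, mul_ite,
    ite_mul, mul_one, mul_zero, zero_mul, sum_add_distrib, sum_sub_distrib, sum_ite_eq, mem_univ,
    if_true, sum_const, card_univ, nsmul_eq_mul]
  field_simp
  ring

/-- Variance over the sample of the conditional bootstrap mean:
`Var_L(E_U[v̂(L_U)]) = ((3−n)(n−1)/n³)·μ₂² + ((n−1)²/n³)·μ₄`. -/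
theorem variance_of_conditional_bootstrap_mean
    {Ω : Type*} [MeasurableSpace Ω] (μ : Measure Ω) [IsProbabilityMeasure μ]
    (n m : ℕ) [NeZero n] (hm : 2 ≤ m)
    (X : Fin n → Ω → ℝ) (hXmeas : ∀ i, Measurable (X i))
    (hXindep : iIndepFun X μ)
    (ν : Measure ℝ) (hXid : ∀ i, Measure.map (X i) μ = ν)
    (hL4 : ∀ i, MemLp (X i) 4 μ)
    (hcentered : ∫ ω, X ⟨0, Nat.pos_of_ne_zero (NeZero.ne n)⟩ ω ∂μ = 0)
    (μ₂ μ₄ : ℝ)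
    (hμ₂ : μ₂ = ∫ ω, (X ⟨0, Nat.pos_of_ne_zero (NeZero.ne n)⟩ ω) ^ 2 ∂μ)
    (hμ₄ : μ₄ = ∫ ω, (X ⟨0, Nat.pos_of_ne_zero (NeZero.ne n)⟩ ω) ^ 4 ∂μ) :
    variance (fun ω => ∫ u, vhatBoot n m X ω u ∂(unif n m)) μ
      = ((3 - (n : ℝ)) * ((n : ℝ) - 1) / (n : ℝ) ^ 3) * μ₂ ^ 2
        + (((n : ℝ) - 1) ^ 2 / (n : ℝ) ^ 3) * μ₄ := by
  set i₀ : Fin n := ⟨0, Nat.pos_of_ne_zero (NeZero.ne n)⟩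
  have hmoment (i : Fin n) (p : ℕ) : ∫ ω, X i ω ^ p ∂μ = ∫ ω, X i₀ ω ^ p ∂μ :=
    (IdentDistrib.comp ⟨(hXmeas i).aemeasurable, (hXmeas i₀).aemeasurable, by rw [hXid, hXid]⟩
      (measurable_id.pow_const p)).integral_eq
  have h1 (i : Fin n) : ∫ ω, X i ω ∂μ = 0 := by simpa [hcentered] using hmoment i 1
  have h2 (i : Fin n) : ∫ ω, X i ω ^ 2 ∂μ = μ₂ := hμ₂ ▸ hmoment i 2
  have h4 (i : Fin n) : ∫ ω, X i ω ^ 4 ∂μ = μ₄ := hμ₄ ▸ hmoment i 4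
  have hQ : (fun ω => ∫ u, vhatBoot n m X ω u ∂unif n m)
      = fun ω => ∑ a, ∑ b, empiricalVarianceMatrix (Fin n) a b * (X a ω * X b ω) := by
    funext ω
    rw [integral_vhatBoot_s8 hm, ← inv_two_mul_sq_mul_sum_sum_sub_sq, Fintype.card_fin]
  rw [hQ, hXindep.variance_quadratic_form hXmeas hL4 h1 h2 h4]
  rw [sum_empiricalVarianceMatrix_diag_sq, sum_sum_empiricalVarianceMatrix_mul_add_transpose,
    Fintype.card_fin]
  field_simp
  ring
end

section
/- With m = cn for fixed c > 0 (or more generally n, m, N → ∞ appropriately), the difference of MSEs satisfies MSE(ṽ(L,B)) − MSE(v̂(L)) = (1/(Nm))(μ₄ − μ₂²) + (1/n²)(−2μ₄ + 3μ₂²) + o(1/(Nm) + 1/n²). -/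
open MeasureTheory Filter

/-- Explicit closed form of `E_L[Var_U(v̂(L_U))]` for bootstrap samples of size `m`
from a centered sample of size `n` with moments `μ₂, μ₄`. -/
noncomputable def expCondVar (μ₂ μ₄ : ℝ) (n m : ℕ) : ℝ :=
  (((n : ℝ) - 1) / ((n : ℝ) * m * ((m : ℝ) - 1))) *
    ((3 * (m : ℝ) - 3
        + (((n : ℝ) ^ 2 - 2 * n + 3) / (n : ℝ) ^ 2) * (6 - 4 * (m : ℝ))) * μ₂ ^ 2
      + ((m : ℝ) - 1
        + (((n : ℝ) - 1) / (n : ℝ) ^ 2) * (6 - 4 * (m : ℝ))) * μ₄)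

/-- Explicit closed form of `Var_L(E_U[v̂(L_U)])`. -/
noncomputable def varCondMean (μ₂ μ₄ : ℝ) (n : ℕ) : ℝ :=
  ((3 - (n : ℝ)) * ((n : ℝ) - 1) / (n : ℝ) ^ 3) * μ₂ ^ 2
    + (((n : ℝ) - 1) ^ 2 / (n : ℝ) ^ 3) * μ₄

/-- Explicit MSE of the bagged sample variance estimator with `N` bootstrap
samples of size `m`. -/
noncomputable def mseBagged (μ₂ μ₄ : ℝ) (n m N : ℕ) : ℝ :=
  (N : ℝ)⁻¹ * expCondVar μ₂ μ₄ n m + varCondMean μ₂ μ₄ n + μ₂ ^ 2 / (n : ℝ) ^ 2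

/-- Explicit MSE of the plain unbiased sample variance estimator. -/
noncomputable def msePlain (μ₂ μ₄ : ℝ) (n : ℕ) : ℝ :=
  ((3 - (n : ℝ)) / ((n : ℝ) * ((n : ℝ) - 1))) * μ₂ ^ 2 + μ₄ / n

/-! The remainder splits as `(N m)⁻¹ a + (n²)⁻¹ b`, where `a = m · expCondVar − (μ₄ − μ₂²)`
depends only on `(n, m)` and `b` only on `n`. Both tend to `0` as `n, m → ∞`, and dividing by `(N m)⁻¹ + (n²)⁻¹` turns the remainder into a weighted mean of `a` and `b`. -/

open Topology

lemma tendsto_weighted_mean_of_tendsto_zero {ι : Type*} {l : Filter ι} {u v a b : ι → ℝ}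
    (hu : ∀ k, 0 ≤ u k) (hv : ∀ k, 0 ≤ v k)
    (ha : Tendsto a l (𝓝 0)) (hb : Tendsto b l (𝓝 0)) :
    Tendsto (fun k => (u k * a k + v k * b k) / (u k + v k)) l (𝓝 0) := by
  refine squeeze_zero_norm (fun k => ?_) (by simpa using ha.norm.add hb.norm)
  rw [norm_div, Real.norm_of_nonneg (add_nonneg (hu k) (hv k))]
  refine div_le_of_le_mul₀ (add_nonneg (hu k) (hv k)) (by positivity) ?_
  calc ‖u k * a k + v k * b k‖ ≤ u k * ‖a k‖ + v k * ‖b k‖ := by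
        refine (norm_add_le _ _).trans ?_
        rw [norm_mul, norm_mul, Real.norm_of_nonneg (hu k), Real.norm_of_nonneg (hv k)]
    _ ≤ (‖a k‖ + ‖b k‖) * (u k + v k) := by
        nlinarith [hu k, hv k, norm_nonneg (a k), norm_nonneg (b k)]

lemma tendsto_mul_expCondVar (μ₂ μ₄ : ℝ) :
    Tendsto (fun p : ℕ × ℕ => (p.2 : ℝ) * expCondVar μ₂ μ₄ p.1 p.2) (atTop ×ˢ atTop)
      (𝓝 (μ₄ - μ₂ ^ 2)) := by
  have ht : Tendsto (fun p : ℕ × ℕ => (p.1 : ℝ)⁻¹) (atTop ×ˢ atTop) (𝓝 0) :=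
    tendsto_inv_atTop_zero.comp (tendsto_natCast_atTop_atTop.comp tendsto_fst)
  have hw : Tendsto (fun p : ℕ × ℕ => ((p.2 : ℝ) - 1)⁻¹) (atTop ×ˢ atTop) (𝓝 0) :=
    tendsto_inv_atTop_zero.comp
      (tendsto_atTop_add_const_right _ (-1) (tendsto_natCast_atTop_atTop.comp tendsto_snd))
  -- `m · expCondVar μ₂ μ₄ n m` is a polynomial in `t = 1/n` and `w = 1/(m - 1)`.
  have hF : Continuous fun q : ℝ × ℝ => (1 - q.1) *
      ((3 + (1 - 2 * q.1 + 3 * q.1 ^ 2) * (2 * q.2 - 4)) * μ₂ ^ 2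
        + (1 + (q.1 - q.1 ^ 2) * (2 * q.2 - 4)) * μ₄) := by fun_prop
  have hlim := (hF.tendsto (0, 0)).comp (ht.prodMk_nhds hw)
  refine Tendsto.congr' ?_ (by convert hlim using 2; ring)
  filter_upwards [tendsto_fst.eventually (eventually_ne_atTop 0),
    tendsto_snd.eventually (eventually_ge_atTop 2)] with ⟨n, m⟩ hn hm
  have hn : (n : ℝ) ≠ 0 := by exact_mod_cast hn
  have hm : (m : ℝ) - 1 ≠ 0 := by
    have : (2 : ℝ) ≤ m := by exact_mod_cast hm
    linarith
  simp only [Function.comp, expCondVar]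
  field_simp
  ring

lemma tendsto_sq_mul_varCondMean_add_sub_msePlain (μ₂ μ₄ : ℝ) :
    Tendsto (fun n : ℕ => (n : ℝ) ^ 2 *
        (varCondMean μ₂ μ₄ n + μ₂ ^ 2 / (n : ℝ) ^ 2 - msePlain μ₂ μ₄ n))
      atTop (𝓝 (-2 * μ₄ + 3 * μ₂ ^ 2)) := by
  have ht : Tendsto (fun n : ℕ => (n : ℝ)⁻¹) atTop (𝓝 0) :=
    tendsto_inv_atTop_zero.comp tendsto_natCast_atTop_atTop
  have hF : ContinuousAt (fun t : ℝ => ((3 * t - 1) * (t - 2) / (1 - t) + 1) * μ₂ ^ 2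
      + (t - 2) * μ₄) 0 := by fun_prop (disch := norm_num)
  have hlim := hF.tendsto.comp ht
  refine Tendsto.congr' ?_ (by convert hlim using 2; norm_num; ring)
  filter_upwards [eventually_ge_atTop 2] with n hn
  have hn : (n : ℝ) - 1 ≠ 0 := by
    have : (2 : ℝ) ≤ n := by exact_mod_cast hn
    linarith
  simp only [Function.comp, varCondMean, msePlain]
  field_simp
  ring

theorem mse_difference_asymptotics_general
    (μ₂ μ₄ : ℝ)
    (m N : ℕ → ℕ)
    (hmtop : Tendsto m atTop atTop) :
    Tendsto
      (fun n : ℕ =>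
        (mseBagged μ₂ μ₄ n (m n) (N n) - msePlain μ₂ μ₄ n
            - ((μ₄ - μ₂ ^ 2) / ((N n : ℝ) * (m n : ℝ))
              + (-2 * μ₄ + 3 * μ₂ ^ 2) / (n : ℝ) ^ 2))
          / (((N n : ℝ) * (m n : ℝ))⁻¹ + ((n : ℝ) ^ 2)⁻¹))
      atTop (nhds 0) := by
  have hbag := tendsto_sub_nhds_zero_iff.2
    ((tendsto_mul_expCondVar μ₂ μ₄).comp (tendsto_id.prodMk hmtop))
  have hplain := tendsto_sub_nhds_zero_iff.2 (tendsto_sq_mul_varCondMean_add_sub_msePlain μ₂ μ₄)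
  refine (tendsto_weighted_mean_of_tendsto_zero (u := fun n => ((N n : ℝ) * m n)⁻¹)
    (v := fun n : ℕ => ((n : ℝ) ^ 2)⁻¹) (fun _ => by positivity) (fun _ => by positivity)
    hbag hplain).congr' ?_
  filter_upwards [eventually_ne_atTop 0, hmtop.eventually_ne_atTop 0] with n hn hm
  have hn : (n : ℝ) ≠ 0 := by exact_mod_cast hn
  have hm : (m n : ℝ) ≠ 0 := by exact_mod_cast hm
  simp only [Function.comp, id, mseBagged, mul_inv, div_eq_mul_inv]
  field_simp
  ring

/-- Asymptotic expansion of the MSE difference: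
`MSE(ṽ) − MSE(v̂) = (μ₄ − μ₂²)/(Nm) + (−2μ₄ + 3μ₂²)/n² + o(1/(Nm) + 1/n²)`
as `n → ∞` with `m = m(n) → ∞` and any iteration numbers `N(n) ≥ 1`. -/
theorem mse_difference_asymptotics
    (ν : Measure ℝ) [IsProbabilityMeasure ν]
    (hmom : MemLp (fun x : ℝ => x) 4 ν)
    (hcentered : ∫ x, x ∂ν = 0)
    (μ₂ μ₄ : ℝ) (hμ₂ : μ₂ = ∫ x, x ^ 2 ∂ν) (hμ₄ : μ₄ = ∫ x, x ^ 4 ∂ν)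
    (m N : ℕ → ℕ) (hm : ∀ k, 2 ≤ m k) (hN : ∀ k, 1 ≤ N k)
    (hmtop : Tendsto m atTop atTop) :
    Tendsto
      (fun n : ℕ =>
        (mseBagged μ₂ μ₄ n (m n) (N n) - msePlain μ₂ μ₄ n
            - ((μ₄ - μ₂ ^ 2) / ((N n : ℝ) * (m n : ℝ))
              + (-2 * μ₄ + 3 * μ₂ ^ 2) / (n : ℝ) ^ 2))
          / (((N n : ℝ) * (m n : ℝ))⁻¹ + ((n : ℝ) ^ 2)⁻¹))
      atTop (nhds 0) :=
  mse_difference_asymptotics_general μ₂ μ₄ m N hmtop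
end

section
/- Conversely, if the kurtosis satisfies κ = μ₄/μ₂² < 3/2 (i.e. −2μ₄ + 3μ₂² > 0), then for every choice of N and m, the leading-order MSE difference (1/(Nm))(μ₄ − μ₂²) + (1/n²)(−2μ₄ + 3μ₂²) is strictly positive; i.e., bagging deteriorates the variance estimation to leading order. -/
/-!
Both summands are nonnegative multiples of nonnegative quantities: `μ₄ - μ₂²` is the variance of
`X²`, and `3μ₂² - 2μ₄ > 0` is the kurtosis hypothesis cleared of its denominator. The second one
is strictly positive, so the sum is too.
-/

open MeasureTheory ProbabilityTheory

section FourthMoment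

variable {Ω : Type*} {mΩ : MeasurableSpace Ω} {μ : Measure Ω} {X : Ω → ℝ}

lemma MeasureTheory.MemLp.sq_of_memLp_four (hX : MemLp X 4 μ) : MemLp (X ^ 2) 2 μ := by
  have : ENNReal.HolderTriple 4 4 2 := ⟨by
    rw [show (4 : ENNReal) = 2 * 2 by norm_num, ENNReal.mul_inv (by simp) (by simp), ← two_mul,
      ← mul_assoc, ENNReal.mul_inv_cancel (by simp) (by simp), one_mul]⟩
  simpa [sq] using hX.mul hX

lemma sq_integral_sq_le_integral_pow_four [IsProbabilityMeasure μ] (hX : MemLp X 4 μ) :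
    μ[X ^ 2] ^ 2 ≤ μ[X ^ 4] := by
  have h := variance_nonneg (X ^ 2) μ
  rw [variance_eq_sub hX.sq_of_memLp_four, ← pow_mul] at h
  linarith

end FourthMoment

theorem bagging_hurts_of_kurtosis_lt_general
    (ν : Measure ℝ) [IsProbabilityMeasure ν]
    (hmom : MemLp (fun x : ℝ => x) 4 ν)
    (μ₂ μ₄ : ℝ) (hμ₂ : μ₂ = ∫ x, x ^ 2 ∂ν) (hμ₄ : μ₄ = ∫ x, x ^ 4 ∂ν)
    (hμ₂pos : 0 < μ₂)
    (hkurt : μ₄ / μ₂ ^ 2 < 3 / 2) :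
    ∀ n m N : ℕ, 0 < n → 0 < m → 0 < N →
      ((N : ℝ) * m)⁻¹ * (μ₄ - μ₂ ^ 2)
        + ((n : ℝ) ^ 2)⁻¹ * (-2 * μ₄ + 3 * μ₂ ^ 2) > 0 := by
  intro n m N hn hm hN
  have hvar : 0 ≤ μ₄ - μ₂ ^ 2 := by
    subst hμ₂ hμ₄
    simpa using sq_integral_sq_le_integral_pow_four hmom
  have hkurt' : 0 < -2 * μ₄ + 3 * μ₂ ^ 2 := by
    rw [div_lt_iff₀ (by positivity)] at hkurt
    linarith
  have hfirst : 0 ≤ ((N : ℝ) * m)⁻¹ * (μ₄ - μ₂ ^ 2) := by positivity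
  have hsecond : 0 < ((n : ℝ) ^ 2)⁻¹ * (-2 * μ₄ + 3 * μ₂ ^ 2) := by positivity
  linarith

/-- If the kurtosis `κ = μ₄/μ₂²` is below `3/2` (i.e. `−2μ₄ + 3μ₂² > 0`), then
for every choice of `N` and `m` the leading-order MSE difference
`(1/(Nm))(μ₄ − μ₂²) + (1/n²)(−2μ₄ + 3μ₂²)` is strictly positive:
bagging deteriorates the variance estimation to leading order. -/
theorem bagging_hurts_of_kurtosis_lt
    (ν : Measure ℝ) [IsProbabilityMeasure ν]
    (hmom : MemLp (fun x : ℝ => x) 4 ν)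
    (hcentered : ∫ x, x ∂ν = 0)
    (μ₂ μ₄ : ℝ) (hμ₂ : μ₂ = ∫ x, x ^ 2 ∂ν) (hμ₄ : μ₄ = ∫ x, x ^ 4 ∂ν)
    (hμ₂pos : 0 < μ₂)
    (hkurt : μ₄ / μ₂ ^ 2 < 3 / 2) :
    ∀ n m N : ℕ, 0 < n → 0 < m → 0 < N →
      ((N : ℝ) * m)⁻¹ * (μ₄ - μ₂ ^ 2)
        + ((n : ℝ) ^ 2)⁻¹ * (-2 * μ₄ + 3 * μ₂ ^ 2) > 0 :=
  bagging_hurts_of_kurtosis_lt_general ν hmom μ₂ μ₄ hμ₂ hμ₄ hμ₂pos hkurt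
end
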